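/- arXiv:2511.03323 — 4 statements merged into one kernel-verified Lean document; each statement's English description precedes it below -/
import Mathlib

section
/- Let l be a positive integer dividing ord_{nr}(q), the multiplicative order of q modulo nr. Then the sum over all positive divisors j of l of j·N_j equals gcd(n, (q^l−1)/r) if gcd(r, nr/gcd(nr, q^l−1)) = 1, and equals 0 if gcd(r, nr/gcd(nr, q^l−1)) > 1. -/
open scoped Classical

/-- The `q`-cyclotomic coset of `i` modulo `N`, with representatives taken in `{1, …, N}`. -/
noncomputable def cosetOf (q N i : ℕ) : Finset ℕ :=
  (Finset.Icc 1 N).filter (fun x => ∃ j : ℕ, x ≡ i * q ^ j [MOD N])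

/-- `Z_{n,r} = {1 + i r : 0 ≤ i ≤ n-1}`. -/
def Zset (n r : ℕ) : Finset ℕ := (Finset.range n).image (fun i => 1 + i * r)

/-- The collection of `q`-cyclotomic cosets contained in `Z_{n,r}`. -/
noncomputable def cosetsIn (q n r : ℕ) : Finset (Finset ℕ) :=
  (Zset n r).image (fun i => cosetOf q (n * r) i)

/-- `N_l`: the number of `q`-cyclotomic cosets of size `l` contained in `Z_{n,r}`. -/
noncomputable def Ncount (q n r l : ℕ) : ℕ :=
  ((cosetsIn q n r).filter (fun C => C.card = l)).card

/-- Coset leader: the smallest element of a coset. -/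
noncomputable def leader (C : Finset ℕ) : ℕ := sInf (C : Set ℕ)

/-- The sorted (increasing) list of coset leaders of the cosets of size `l` in `Z_{n,r}`. -/
noncomputable def leaderList (q n r l : ℕ) : List ℕ :=
  Finset.sort (((cosetsIn q n r).filter (fun C => C.card = l)).image leader) (· ≤ ·)

/-- `δ_i^{(l)}`: the `i`-th smallest coset leader (1-indexed). -/
noncomputable def delta (q n r l i : ℕ) : ℕ := (leaderList q n r l).getD (i - 1) 0

/-!
Since `q ≡ 1 (mod r)`, `Z_{n,r}` is a union of `q`-cyclotomic cosets modulo `nr`, so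
`∑_{j ∣ l} j N_j` counts the elements of `Z_{n,r}` whose coset has size dividing `l`. A coset is an
orbit of `⟨q⟩ ≤ (ℤ/nrℤ)ˣ`, of size the minimal period of multiplication by `q`, so its size divides
`l` exactly when `x q^l ≡ x (mod nr)`, i.e. when `d ∣ x` with
`d = nr / gcd(nr, q^l - 1) = n / gcd(n, (q^l - 1)/r)`. Among the `k < n`, the congruence
`d ∣ 1 + k r` has no solution unless `gcd(r, d) = 1`, and otherwise exactly one in each of the
`n / d` blocks of `d` consecutive integers.
-/

open Finset MulAction Subgroup Function

lemma card_filter_Icc_natCast {N : ℕ} [NeZero N] (p : ZMod N → Prop) [DecidablePred p] :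
    #{x ∈ Icc 1 N | p ((x : ℕ) : ZMod N)} = #{z | p z} := by
  -- `x ↦ x - 1` maps `Icc 1 N` onto the canonical representatives `0, …, N - 1`.
  apply card_nbij (Nat.cast : ℕ → ZMod N)
  · intro x hx
    simpa using (mem_filter.1 hx).2
  · intro x hx y hy hxy
    simp only [coe_filter, mem_Icc, Set.mem_ofPred_eq] at hx hy
    have h : (x - 1) % N = (y - 1) % N := by
      rw [← ZMod.natCast_eq_natCast_iff', Nat.cast_sub hx.1.1, Nat.cast_sub hy.1.1, hxy]
    rw [Nat.mod_eq_of_lt (by omega), Nat.mod_eq_of_lt (by omega)] at h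
    omega
  · intro z hz
    have := ZMod.val_lt (z - 1)
    refine ⟨(z - 1).val + 1, ?_, by simp⟩
    simp only [coe_filter, mem_univ, true_and, Set.mem_ofPred_eq] at hz
    simp only [coe_filter, mem_Icc, Set.mem_ofPred_eq]
    refine ⟨⟨by omega, by omega⟩, by simpa using hz⟩

lemma mem_orbit_zpowers_iff {G α : Type*} [Group G] [Finite G] [MulAction G α] {u : G} {a b : α} :
    b ∈ orbit (zpowers u) a ↔ ∃ j : ℕ, u ^ j • a = b := by
  simp only [mem_orbit_iff, Subtype.exists, Subgroup.mk_smul, ← mem_powers_iff_mem_zpowers,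
    Submonoid.mem_powers_iff]
  constructor
  · rintro ⟨g, ⟨j, rfl⟩, h⟩; exact ⟨j, h⟩
  · rintro ⟨j, h⟩; exact ⟨_, ⟨j, rfl⟩, h⟩

section Cosets

variable {q N : ℕ}

lemma self_mem_cosetOf {x : ℕ} (hx : x ∈ Icc 1 N) : x ∈ cosetOf q N x :=
  mem_filter.2 ⟨hx, 0, by simp [Nat.ModEq.refl]⟩

lemma cosetOf_eq_filter_orbit (hq : q.Coprime N) (i : ℕ) :
    cosetOf q N i =
      {x ∈ Icc 1 N |
        ((x : ℕ) : ZMod N) ∈ orbit (zpowers (ZMod.unitOfCoprime q hq)) (i : ZMod N)} := by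
  refine filter_congr fun x _ => ?_
  simp only [mem_orbit_zpowers_iff, Units.smul_def, Units.val_pow_eq_pow_val,
    ZMod.coe_unitOfCoprime, smul_eq_mul, ← ZMod.natCast_eq_natCast_iff, Nat.cast_mul, Nat.cast_pow,
    mul_comm _ (i : ZMod N), eq_comm]

lemma card_cosetOf [NeZero N] (hq : q.Coprime N) (i : ℕ) :
    #(cosetOf q N i) = minimalPeriod (ZMod.unitOfCoprime q hq • ·) (i : ZMod N) := by
  rw [minimalPeriod_eq_card, cosetOf_eq_filter_orbit hq,
    card_filter_Icc_natCast (· ∈ orbit (zpowers (ZMod.unitOfCoprime q hq)) (i : ZMod N)),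
    Fintype.card_subtype]

lemma card_cosetOf_dvd_iff [NeZero N] (hq : q.Coprime N) (i l : ℕ) :
    #(cosetOf q N i) ∣ l ↔ i * q ^ l ≡ i [MOD N] := by
  rw [card_cosetOf hq, ← isPeriodicPt_iff_minimalPeriod_dvd, IsPeriodicPt, IsFixedPt, smul_iterate,
    ← ZMod.natCast_eq_natCast_iff]
  simp only [Units.smul_def, Units.val_pow_eq_pow_val, ZMod.coe_unitOfCoprime,
    smul_eq_mul, Nat.cast_mul, Nat.cast_pow, mul_comm]

lemma cosetOf_eq_cosetOf_iff (hq : q.Coprime N) {x i : ℕ} (hx : x ∈ Icc 1 N) :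
    cosetOf q N x = cosetOf q N i ↔ x ∈ cosetOf q N i := by
  refine ⟨fun h => h ▸ self_mem_cosetOf hx, fun h => ?_⟩
  rw [cosetOf_eq_filter_orbit hq, mem_filter] at h
  rw [cosetOf_eq_filter_orbit hq, cosetOf_eq_filter_orbit hq, orbit_eq_iff.2 h.2]

lemma sum_card_cosetOf_dvd_eq_card_filter_modEq [NeZero N] (hq : q.Coprime N) {T : Finset ℕ}
    (hT : T ⊆ Icc 1 N) (hcoset : ∀ i ∈ T, cosetOf q N i ⊆ T) (l : ℕ) :
    ∑ C ∈ T.image (cosetOf q N) with #C ∣ l, #C = #{x ∈ T | x * q ^ l ≡ x [MOD N]} := by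
  rw [card_eq_sum_card_fiberwise (f := cosetOf q N) (t := {C ∈ T.image (cosetOf q N) | #C ∣ l})]
  · refine sum_congr rfl fun C hC => ?_
    obtain ⟨⟨i, hi, rfl⟩, hil⟩ := by simpa only [mem_filter, mem_image] using hC
    congr 1
    ext x
    simp only [mem_filter]
    constructor
    · intro hx
      have hxi := (cosetOf_eq_cosetOf_iff hq (mem_filter.1 hx).1).2 hx
      refine ⟨⟨hcoset i hi hx, ?_⟩, hxi⟩
      rwa [← card_cosetOf_dvd_iff hq, hxi]
    · rintro ⟨⟨hxT, -⟩, hxi⟩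
      exact (cosetOf_eq_cosetOf_iff hq (hT hxT)).1 hxi
  · intro x hx
    obtain ⟨hxT, hxl⟩ := mem_filter.1 hx
    exact mem_filter.2 ⟨mem_image_of_mem _ hxT, (card_cosetOf_dvd_iff hq x l).2 hxl⟩

end Cosets

lemma sum_divisors_mul_card_filter_eq {α : Type*} (s : Finset α) (f : α → ℕ) {l : ℕ} (hl : l ≠ 0) :
    ∑ j ∈ l.divisors, j * #{a ∈ s | f a = j} = ∑ a ∈ s with f a ∣ l, f a := by
  rw [← sum_fiberwise_of_maps_to (g := f) (t := l.divisors)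
    fun a ha => Nat.mem_divisors.2 ⟨(mem_filter.1 ha).2, hl⟩]
  refine sum_congr rfl fun j hj => ?_
  rw [filter_filter, sum_congr rfl fun a ha => (mem_filter.1 ha).2.2, sum_const, smul_eq_mul,
    mul_comm]
  congr 2
  ext a
  simp only [mem_filter]
  exact and_congr_right fun _ => ⟨fun h => ⟨h ▸ Nat.dvd_of_mem_divisors hj, h⟩, fun h => h.2⟩

lemma mem_Zset_iff {n r x : ℕ} (hr : 0 < r) :
    x ∈ Zset n r ↔ x ∈ Icc 1 (n * r) ∧ x ≡ 1 [MOD r] := by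
  simp only [Zset, mem_image, mem_range, mem_Icc]
  constructor
  · rintro ⟨k, hk, rfl⟩
    have : (k + 1) * r ≤ n * r := Nat.mul_le_mul_right r hk
    refine ⟨⟨by omega, by rw [add_mul] at this; omega⟩, ?_⟩
    simp [Nat.ModEq, Nat.add_mul_mod_self_right]
  · rintro ⟨⟨h1, h2⟩, hx⟩
    obtain ⟨k, hk⟩ := (Nat.modEq_iff_dvd' h1).1 hx.symm
    refine ⟨k, Nat.lt_of_mul_lt_mul_left (a := r) ?_, by rw [mul_comm]; omega⟩
    rw [mul_comm r n]
    omega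

lemma cosetOf_subset_Zset {q n r i : ℕ} (hr : 0 < r) (hqr : q ≡ 1 [MOD r]) (hi : i ∈ Zset n r) :
    cosetOf q (n * r) i ⊆ Zset n r := by
  intro x hx
  obtain ⟨hxI, j, hj⟩ := mem_filter.1 hx
  refine (mem_Zset_iff hr).2 ⟨hxI, ?_⟩
  calc x ≡ i * q ^ j [MOD r] := hj.of_mul_left n
    _ ≡ 1 * 1 ^ j [MOD r] := ((mem_Zset_iff hr).1 hi).2.mul (hqr.pow j)
    _ = 1 := by simp

lemma card_filter_Zset {n r : ℕ} (hr : 0 < r) (p : ℕ → Prop) [DecidablePred p] :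
    #{x ∈ Zset n r | p x} = #{k ∈ range n | p (1 + k * r)} := by
  rw [Zset, filter_image, card_image_of_injective]
  intro a b h
  exact Nat.eq_of_mul_eq_mul_right hr (by simpa using h)

lemma dvd_mul_iff_div_gcd_dvd {N b x : ℕ} (hN : 0 < N) : N ∣ x * b ↔ N / N.gcd b ∣ x := by
  have hg : 0 < N.gcd b := Nat.gcd_pos_of_pos_left b hN
  obtain ⟨N', b', hcop, hN', hb'⟩ := Nat.exists_coprime N b
  set g := N.gcd b
  rw [Nat.div_eq_of_eq_mul_left hg hN', hN', hb', ← mul_assoc, Nat.mul_dvd_mul_iff_right hg]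
  exact hcop.dvd_mul_right

lemma mul_modEq_self_iff {N a x : ℕ} (hN : 0 < N) (ha : 1 ≤ a) :
    x * a ≡ x [MOD N] ↔ N / N.gcd (a - 1) ∣ x := by
  rw [Nat.ModEq.comm, Nat.modEq_iff_dvd' (Nat.le_mul_of_pos_right x ha), ← Nat.mul_sub_one,
    dvd_mul_iff_div_gcd_dvd hN]

lemma card_filter_range_dvd_one_add_mul {n d r : ℕ} (hd : 0 < d) (hdn : d ∣ n) :
    #{k ∈ range n | d ∣ 1 + k * r} = if Nat.gcd r d = 1 then n / d else 0 := by
  split_ifs with hrd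
  · have : NeZero d := ⟨hd.ne'⟩
    have hinv : (r : ZMod d) * (r : ZMod d)⁻¹ = 1 := ZMod.coe_mul_inv_eq_one r hrd
    have hsol : ∀ k, d ∣ 1 + k * r ↔ k ≡ (-(r : ZMod d)⁻¹).val [MOD d] := by
      intro k
      rw [← ZMod.natCast_eq_zero_iff, ← ZMod.natCast_eq_natCast_iff, ZMod.natCast_val,
        ZMod.cast_id', id, Nat.cast_add, Nat.cast_one, Nat.cast_mul]
      constructor
      · intro h
        linear_combination (r : ZMod d)⁻¹ * h - (k : ZMod d) * hinv
      · intro h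
        linear_combination (r : ZMod d) * h - hinv
    rw [filter_congr fun k _ => hsol k, ← Nat.count_eq_card_filter_range, Nat.count_modEq_card _ hd,
      Nat.mod_eq_zero_of_dvd hdn]
    simp
  · rw [card_eq_zero, filter_eq_empty_iff]
    intro k _ hk
    apply hrd
    have : Nat.gcd r d ∣ 1 + k * r := (Nat.gcd_dvd_right r d).trans hk
    exact Nat.dvd_one.1 ((Nat.dvd_add_left ((Nat.gcd_dvd_left r d).mul_left k)).1 this)

lemma mul_div_gcd_eq_div_gcd_div {n r b : ℕ} (hr : 0 < r) (hrb : r ∣ b) :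
    n * r / (n * r).gcd b = n / n.gcd (b / r) := by
  conv_lhs => rw [← Nat.div_mul_cancel hrb, Nat.gcd_mul_right]
  exact Nat.mul_div_mul_right n _ hr

theorem stmt0_general (q n r l : ℕ) (hq : IsPrimePow q) (hn : 0 < n)
    (hco : Nat.Coprime n q) (hr : 0 < r) (hrdvd : r ∣ q - 1)
    (hl : 0 < l) :
    ∑ j ∈ l.divisors, j * Ncount q n r j =
      if Nat.gcd r ((n * r) / Nat.gcd (n * r) (q ^ l - 1)) = 1
      then Nat.gcd n ((q ^ l - 1) / r) else 0 := by
  have hq1 : 1 ≤ q := hq.one_lt.le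
  have hqr : q ≡ 1 [MOD r] := ((Nat.modEq_iff_dvd' hq1).2 hrdvd).symm
  have hqN : q.Coprime (n * r) := hco.symm.mul_right (hqr.gcd_eq.trans (Nat.gcd_one_left r))
  have : NeZero (n * r) := ⟨(Nat.mul_pos hn hr).ne'⟩
  set d := n * r / (n * r).gcd (q ^ l - 1)
  have hd : d = n / n.gcd ((q ^ l - 1) / r) :=
    mul_div_gcd_eq_div_gcd_div hr (hrdvd.trans (by simpa using Nat.sub_dvd_pow_sub_pow q 1 l))
  have hnd : n / d = n.gcd ((q ^ l - 1) / r) := by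
    rw [hd, Nat.div_div_self (Nat.gcd_dvd_left _ _) hn.ne']
  calc ∑ j ∈ l.divisors, j * Ncount q n r j
      = ∑ C ∈ cosetsIn q n r with #C ∣ l, #C := sum_divisors_mul_card_filter_eq _ _ hl.ne'
    _ = #{x ∈ Zset n r | x * q ^ l ≡ x [MOD n * r]} :=
        sum_card_cosetOf_dvd_eq_card_filter_modEq hqN (fun x hx => ((mem_Zset_iff hr).1 hx).1)
          (fun i hi => cosetOf_subset_Zset hr hqr hi) l
    _ = #{k ∈ range n | d ∣ 1 + k * r} := by
        rw [card_filter_Zset hr]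
        simp_rw [mul_modEq_self_iff (Nat.mul_pos hn hr) (Nat.one_le_pow l q hq1)]
        rfl
    _ = _ := by
        rw [card_filter_range_dvd_one_add_mul (hd ▸ Nat.div_gcd_pos_of_pos_left _ hn)
          (hd ▸ Nat.div_dvd_of_dvd (Nat.gcd_dvd_left _ _)), hnd]

theorem stmt0 (q n r l : ℕ) (hq : IsPrimePow q) (hn : 0 < n)
    (hco : Nat.Coprime n q) (hr : 0 < r) (hrdvd : r ∣ q - 1)
    (hl : 0 < l) (hld : l ∣ orderOf (q : ZMod (n * r))) :
    ∑ j ∈ l.divisors, j * Ncount q n r j =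
      if Nat.gcd r ((n * r) / Nat.gcd (n * r) (q ^ l - 1)) = 1
      then Nat.gcd n ((q ^ l - 1) / r) else 0 :=
  stmt0_general q n r l hq hn hco hr hrdvd hl
end

section
/- Suppose nr = (q^m−1)/s for positive integers m and s. If N_m ≥ 1, then δ^{(m)}_{⌊N_m/2⌋+1} > 1 + (qN_m/(2(q−1)) − 2)·r as rational numbers; equivalently, 2(q−1)·(δ^{(m)}_{⌊N_m/2⌋+1} − 1) > (q·N_m − 4(q−1))·r. -/
open scoped Classical

/-!
Every coset leader in `Z_{n,r}` has the form `1 + i r`, and it is not divisible by `q`: if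
`x = q y` then `y ≡ x q^(m-1)` lies in the same coset and is smaller. Distinct cosets have
distinct leaders, so the `⌊N/2⌋ + 1` smallest leaders of size-`m` cosets are distinct
numbers `1 + i r ≤ δ = 1 + u r` avoiding the class `q ∣ 1 + i r`, which contains at least
`⌊(u+1)/q⌋` of the indices `i ≤ u` because `r` is invertible mod `q`. Hence
`⌊N/2⌋ + 1 ≤ u + 1 - ⌊(u+1)/q⌋`, which rearranges to the claim.
-/

open Finset

section Cosets

variable {q N k : ℕ}

theorem mem_cosetOf {i x : ℕ} :
    x ∈ cosetOf q N i ↔ (1 ≤ x ∧ x ≤ N) ∧ ∃ j, x ≡ i * q ^ j [MOD N] := by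
  simp [cosetOf]

theorem leader_mem {C : Finset ℕ} (hC : C.Nonempty) : leader C ∈ C :=
  Nat.sInf_mem (coe_nonempty.mpr hC)

theorem modEq_mul_pow_trans {x y z a b : ℕ} (h₁ : z ≡ x * q ^ a [MOD N])
    (h₂ : x ≡ y * q ^ b [MOD N]) : z ≡ y * q ^ (b + a) [MOD N] := by
  rw [pow_add, ← mul_assoc]
  exact h₁.trans (h₂.mul_right _)

theorem modEq_mul_pow_symm (hk : 0 < k) (hqk : q ^ k ≡ 1 [MOD N]) {x i j : ℕ}
    (h : x ≡ i * q ^ j [MOD N]) : i ≡ x * q ^ (k * j - j) [MOD N] := by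
  have hj : j ≤ k * j := Nat.le_mul_of_pos_left j hk
  calc i = i * 1 ^ j := by simp
    _ ≡ i * (q ^ k) ^ j [MOD N] := (hqk.pow j).symm.mul_left i
    _ = i * q ^ j * q ^ (k * j - j) := by
      rw [← pow_mul, mul_assoc, ← pow_add, Nat.add_sub_cancel' hj]
    _ ≡ x * q ^ (k * j - j) [MOD N] := h.symm.mul_right _

theorem cosetOf_eq_of_mem (hk : 0 < k) (hqk : q ^ k ≡ 1 [MOD N]) {i x : ℕ}
    (hx : x ∈ cosetOf q N i) : cosetOf q N x = cosetOf q N i := by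
  obtain ⟨-, j, hj⟩ := mem_cosetOf.mp hx
  ext z
  simp only [mem_cosetOf, and_congr_right_iff]
  refine fun _ => ⟨fun ⟨a, ha⟩ => ⟨_, modEq_mul_pow_trans ha hj⟩, fun ⟨a, ha⟩ => ?_⟩
  exact ⟨_, modEq_mul_pow_trans ha (modEq_mul_pow_symm hk hqk hj)⟩

theorem cosetOf_eq_of_leader_eq (hk : 0 < k) (hqk : q ^ k ≡ 1 [MOD N]) {i i' : ℕ}
    (hi : (cosetOf q N i).Nonempty) (hi' : (cosetOf q N i').Nonempty)
    (h : leader (cosetOf q N i) = leader (cosetOf q N i')) :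
    cosetOf q N i = cosetOf q N i' := by
  rw [← cosetOf_eq_of_mem hk hqk (leader_mem hi), ← cosetOf_eq_of_mem hk hqk (leader_mem hi'),
    h]

theorem not_dvd_leader_cosetOf (hk : 0 < k) (hqk : q ^ k ≡ 1 [MOD N]) (hq : 1 < q) {i : ℕ}
    (hne : (cosetOf q N i).Nonempty) : ¬ q ∣ leader (cosetOf q N i) := by
  rintro ⟨y, hxy⟩
  have hx := leader_mem hne
  obtain ⟨⟨hx1, hxN⟩, -⟩ := mem_cosetOf.mp hx
  have hyx : y < leader (cosetOf q N i) := by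
    rw [hxy] at hx1 ⊢
    exact lt_mul_left (Nat.pos_of_mul_pos_left hx1) hq
  -- `y = x q⁻¹ ≡ x q^(k-1)` lies in the coset of `x`
  have hy : y ∈ cosetOf q N i := by
    rw [← cosetOf_eq_of_mem hk hqk hx, mem_cosetOf]
    refine ⟨⟨?_, by omega⟩, k - 1, ?_⟩
    · rw [hxy] at hx1
      exact Nat.pos_of_mul_pos_left hx1
    calc y = y * 1 := (mul_one y).symm
      _ ≡ y * q ^ k [MOD N] := hqk.symm.mul_left y
      _ = leader (cosetOf q N i) * q ^ (k - 1) := by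
        rw [hxy, mul_comm q, mul_assoc, ← pow_succ', Nat.sub_add_cancel hk]
  exact hyx.not_ge (Nat.sInf_le hy)

theorem modEq_one_of_mem_cosetOf {r i x : ℕ} (hrN : r ∣ N) (hq : q ≡ 1 [MOD r])
    (hi : i ≡ 1 [MOD r]) (hx : x ∈ cosetOf q N i) : x ≡ 1 [MOD r] := by
  obtain ⟨-, j, hj⟩ := mem_cosetOf.mp hx
  simpa using (hj.of_dvd hrN).trans (hi.mul (hq.pow j))

end Cosets

section LeaderSet

variable {q n r k : ℕ}

noncomputable def leaderSet (q n r l : ℕ) : Finset ℕ :=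
  ((cosetsIn q n r).filter (fun C => C.card = l)).image leader

theorem leaderList_eq (l : ℕ) : leaderList q n r l = (leaderSet q n r l).sort (· ≤ ·) := rfl

theorem mem_cosetsIn {C : Finset ℕ} :
    C ∈ cosetsIn q n r ↔ ∃ a < n, cosetOf q (n * r) (1 + a * r) = C := by
  simp [cosetsIn, Zset]

theorem card_leaderSet (hk : 0 < k) (hqk : q ^ k ≡ 1 [MOD n * r]) {l : ℕ} (hl : 0 < l) :
    #(leaderSet q n r l) = Ncount q n r l := by
  refine card_image_of_injOn fun C hC C' hC' h => ?_
  simp only [coe_filter, Set.mem_ofPred_eq, mem_cosetsIn] at hC hC'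
  obtain ⟨⟨a, -, rfl⟩, hCl⟩ := hC
  obtain ⟨⟨a', -, rfl⟩, hC'l⟩ := hC'
  exact cosetOf_eq_of_leader_eq hk hqk (card_pos.mp (hCl ▸ hl)) (card_pos.mp (hC'l ▸ hl)) h

theorem mem_leaderSet (hk : 0 < k) (hqk : q ^ k ≡ 1 [MOD n * r]) (hq : 1 < q)
    (hq1 : q ≡ 1 [MOD r]) {l x : ℕ} (hl : 0 < l) (hx : x ∈ leaderSet q n r l) :
    1 ≤ x ∧ x ≡ 1 [MOD r] ∧ ¬ q ∣ x := by
  simp only [leaderSet, mem_image, mem_filter, mem_cosetsIn] at hx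
  obtain ⟨_, ⟨⟨a, -, rfl⟩, hCl⟩, rfl⟩ := hx
  have hne := card_pos.mp (hCl ▸ hl)
  have hmem := leader_mem hne
  refine ⟨(mem_cosetOf.mp hmem).1.1, ?_, not_dvd_leader_cosetOf hk hqk hq hne⟩
  refine modEq_one_of_mem_cosetOf (dvd_mul_left r n) hq1 ?_ hmem
  simp [Nat.ModEq, Nat.add_mul_mod_self_right]

end LeaderSet

theorem card_filter_not_dvd_one_add_mul_le {q r : ℕ} (hq : 0 < q) (hqr : q.Coprime r) (b : ℕ) :
    #{i ∈ range b | ¬ q ∣ 1 + i * r} ≤ b - b / q := by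
  obtain ⟨i₀, -, hi₀⟩ := Nat.exists_mul_mod_eq_of_coprime (q - 1) hqr.symm hq.ne'
  have hdvd : ∀ i, i ≡ i₀ [MOD q] → q ∣ 1 + i * r := fun i hi => by
    have h : 1 + i * r ≡ 1 + (q - 1) [MOD q] :=
      Nat.ModEq.add_left 1 (by rw [mul_comm]; exact (hi.mul_left r).trans hi₀)
    rw [Nat.add_sub_cancel' hq] at h
    exact Nat.modEq_zero_iff_dvd.mp (h.trans (by simp [Nat.ModEq]))
  have hres : b / q ≤ #{i ∈ range b | q ∣ 1 + i * r} := by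
    calc b / q ≤ b.count (· ≡ i₀ [MOD q]) := by rw [Nat.count_modEq_card _ hq]; omega
      _ ≤ _ := by
        rw [Nat.count_eq_card_filter_range]
        exact card_le_card (monotone_filter_right _ fun i _ => hdvd i)
  have := card_filter_add_card_filter_not (s := range b) (fun i => q ∣ 1 + i * r)
  rw [card_range] at this
  omega

theorem card_le_of_forall_eq_one_add_mul {q r u : ℕ} (hq : 0 < q) (hqr : q.Coprime r)
    {S : Finset ℕ} (hS : ∀ x ∈ S, ¬ q ∣ x ∧ ∃ i ≤ u, x = 1 + i * r) :
    #S ≤ u + 1 - (u + 1) / q :=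
  calc #S ≤ #(image (fun i => 1 + i * r) {i ∈ range (u + 1) | ¬ q ∣ 1 + i * r}) := by
        refine card_le_card fun x hx => ?_
        obtain ⟨hqx, i, hiu, rfl⟩ := hS x hx
        exact mem_image.mpr ⟨i, mem_filter.mpr ⟨mem_range.mpr (by omega), hqx⟩, rfl⟩
    _ ≤ #{i ∈ range (u + 1) | ¬ q ∣ 1 + i * r} := card_image_le
    _ ≤ u + 1 - (u + 1) / q := card_filter_not_dvd_one_add_mul_le hq hqr _

theorem Finset.succ_le_card_filter_le_sort_getElem {α : Type*} [LinearOrder α]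
    (L : Finset α) {j : ℕ} (hj : j < (L.sort (· ≤ ·)).length) :
    j + 1 ≤ #{x ∈ L | x ≤ (L.sort (· ≤ ·))[j]} := by
  have hj' : j < #L := by simpa using hj
  let e := L.orderEmbOfFin rfl
  calc j + 1 = #((Iic (⟨j, hj'⟩ : Fin #L)).map e.toEmbedding) := by simp
    _ ≤ _ := card_le_card fun x hx => by
      obtain ⟨i, hi, rfl⟩ := mem_map.mp hx
      exact mem_filter.mpr ⟨orderEmbOfFin_mem L rfl i, e.monotone (mem_Iic.mp hi)⟩

theorem mul_sub_lt_of_half_add_one_le {q N u : ℕ} (hq : 2 ≤ q)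
    (h : N / 2 + 1 ≤ u + 1 - (u + 1) / q) :
    (q : ℤ) * N - 4 * (q - 1) < 2 * (q - 1) * u := by
  have hN : N ≤ 2 * (N / 2) + 1 := by omega
  have hu : u + 1 < q * ((u + 1) / q + 1) := Nat.lt_mul_div_succ _ (by omega)
  have ht : (u + 1) / q ≤ u + 1 := Nat.div_le_self _ _
  set a := N / 2
  set t := (u + 1) / q
  have h' : a + t ≤ u := by omega
  zify at hN hu h' hq
  nlinarith

theorem lt_sort_getD_half {q r : ℕ} (hq : 2 ≤ q) (hr : 0 < r) (hqr : q.Coprime r)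
    {L : Finset ℕ} (hne : L.Nonempty) (hL : ∀ x ∈ L, 1 ≤ x ∧ x ≡ 1 [MOD r] ∧ ¬ q ∣ x) :
    ((q : ℤ) * #L - 4 * (q - 1)) * r <
      2 * (q - 1) * (((L.sort (· ≤ ·)).getD (#L / 2) 0 : ℕ) - 1 : ℤ) := by
  have hj : #L / 2 < (L.sort (· ≤ ·)).length := by
    rw [length_sort]
    exact Nat.div_lt_self (card_pos.mpr hne) one_lt_two
  rw [List.getD_eq_getElem _ _ hj]
  set δ := (L.sort (· ≤ ·))[#L / 2]
  have hform : ∀ x ∈ L, ∃ i, x = 1 + i * r := fun x hx => by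
    obtain ⟨hx1, hxr, -⟩ := hL x hx
    obtain ⟨i, hi⟩ := (Nat.modEq_iff_dvd' hx1).mp hxr.symm
    exact ⟨i, by rw [mul_comm]; omega⟩
  obtain ⟨u, hu⟩ := hform δ ((mem_sort _).mp (List.getElem_mem hj))
  have hcount : #L / 2 + 1 ≤ u + 1 - (u + 1) / q := by
    refine (succ_le_card_filter_le_sort_getElem L hj).trans
      (card_le_of_forall_eq_one_add_mul (by omega) hqr fun x hx => ?_)
    obtain ⟨hxL, hxδ⟩ := mem_filter.mp hx
    obtain ⟨i, rfl⟩ := hform x hxL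
    refine ⟨(hL _ hxL).2.2, i, ?_, rfl⟩
    rw [show (L.sort (· ≤ ·))[#L / 2] = 1 + u * r from hu] at hxδ
    exact Nat.le_of_mul_le_mul_right (by omega) hr
  rw [hu]
  push_cast
  rw [add_sub_cancel_left, ← mul_assoc]
  exact mul_lt_mul_of_pos_right (mul_sub_lt_of_half_add_one_le hq hcount) (mod_cast hr)

theorem stmt3_general (q n r m s : ℕ) (hq : IsPrimePow q)
    (hr : 0 < r) (hrdvd : r ∣ q - 1) (hm : 0 < m)
    (hnrs : n * r * s = q ^ m - 1)
    (hNm : 1 ≤ Ncount q n r m) :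
    ((q : ℤ) * (Ncount q n r m : ℤ) - 4 * ((q : ℤ) - 1)) * (r : ℤ) <
      2 * ((q : ℤ) - 1) * ((delta q n r m (Ncount q n r m / 2 + 1) : ℤ) - 1) := by
  have hq2 : 2 ≤ q := hq.two_le
  have hqm : q ^ m ≡ 1 [MOD n * r] :=
    ((Nat.modEq_iff_dvd' (Nat.one_le_pow _ _ (by omega))).mpr ⟨s, hnrs.symm⟩).symm
  have hq1 : q ≡ 1 [MOD r] := ((Nat.modEq_iff_dvd' (by omega)).mpr hrdvd).symm
  have hqr : q.Coprime r := Nat.Coprime.coprime_dvd_right hrdvd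
    ((Nat.coprime_self_sub_right (by omega)).mpr (Nat.coprime_one_right q))
  have hcard := card_leaderSet hm hqm hm
  rw [delta, leaderList_eq, Nat.add_sub_cancel, ← hcard]
  exact lt_sort_getD_half hq2 hr hqr (card_pos.mp (hcard ▸ hNm))
    fun x hx => mem_leaderSet hm hqm (by omega) hq1 hm hx

theorem stmt3 (q n r m s : ℕ) (hq : IsPrimePow q) (hn : 0 < n) (hco : Nat.Coprime n q)
    (hr : 0 < r) (hrdvd : r ∣ q - 1) (hm : 0 < m) (hs : 0 < s)
    (hnrs : n * r * s = q ^ m - 1)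
    (hNm : 1 ≤ Ncount q n r m) :
    ((q : ℤ) * (Ncount q n r m : ℤ) - 4 * ((q : ℤ) - 1)) * (r : ℤ) <
      2 * ((q : ℤ) - 1) * ((delta q n r m (Ncount q n r m / 2 + 1) : ℤ) - 1) :=
  stmt3_general q n r m s hq hr hrdvd hm hnrs hNm
end

section
/- Suppose nr = (q^m−1)/s for positive integers m and s. Let i, j, t be integers with 2i ≥ m+1, q^{m−i} ≥ s+1, 1 ≤ j ≤ q−1, t ≥ 0, and t·(q^{m−i+1}−q) < q^i − j·(q^{m−i}−1) − 1. Then 1 ≤ q^i + qt + j < nr and q^i + qt + j is not a coset leader modulo nr, i.e., it is not the smallest element of its q-cyclotomic coset modulo nr. Moreover, the integers q^i + qt + j, taken over all triples (i, j, t) satisfying these conditions, are pairwise distinct. -/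
open scoped Classical

/-!
Write `x = q^i + u` with `u = q t + j` and `k = m - i`. Since `q^m = n r s + 1`, multiplying by
`q^k` gives `x q^k = (u q^k + 1) + n r s`, so `y = u q^k + 1` lies in the coset of `x`, and the
hypothesis on `t` says exactly that `y < x`. From `x q^k = y + n r s < x + n r s` and
`q^k ≥ s + 1` one gets `x < n r`. For distinctness, `u < q^i` makes `i` the base-`q` length of
`x`, after which `j` and `t` are the last digit and the remaining digits of `u`.
-/

theorem mul_pow_add_one_lt_iff {q i k j t : ℕ} :
    (q * t + j) * q ^ k + 1 < q ^ i + (q * t + j) ↔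
      (t : ℤ) * ((q : ℤ) ^ (k + 1) - q) < (q : ℤ) ^ i - j * ((q : ℤ) ^ k - 1) - 1 := by
  rw [← Nat.cast_lt (α := ℤ), pow_succ]
  push_cast
  constructor <;> intro h <;> linarith

theorem lt_of_mul_add_one_lt_add {Q a u : ℕ} (hQ : 2 ≤ Q) (h : u * Q + 1 < a + u) : u < a := by
  nlinarith

theorem pow_add_mul_pow_eq {q i k u N s : ℕ} (h : q ^ (i + k) = N * s + 1) :
    (q ^ i + u) * q ^ k = (u * q ^ k + 1) + N * s := by
  rw [add_mul, ← pow_add, h]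
  ring

theorem lt_of_mul_eq_add_mul {x y Q N s : ℕ} (h : x * Q = y + N * s) (hyx : y < x)
    (hQ : s + 1 ≤ Q) : x < N := by
  by_contra! hNx
  nlinarith

theorem mem_cosetOf_of_modEq {q N x y k : ℕ} (hy : 1 ≤ y) (hyN : y ≤ N)
    (h : y ≡ x * q ^ k [MOD N]) : y ∈ cosetOf q N x :=
  Finset.mem_filter.2 ⟨Finset.mem_Icc.2 ⟨hy, hyN⟩, k, h⟩

theorem eq_of_pow_add_eq_pow_add {q i i' u u' : ℕ} (hq : 1 < q) (hu : u < q ^ i)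
    (hu' : u' < q ^ i') (h : q ^ i + u = q ^ i' + u') : i = i' ∧ u = u' := by
  have log_eq : ∀ {i u}, u < q ^ i → Nat.log q (q ^ i + u) = i := fun hu =>
    Nat.log_eq_of_pow_le_of_lt_pow (Nat.le_add_right _ _) (by rw [pow_succ]; nlinarith)
  obtain rfl : i = i' := by rw [← log_eq hu, ← log_eq hu', h]
  exact ⟨rfl, by omega⟩

theorem eq_of_mul_add_eq_mul_add {q t t' j j' : ℕ} (hj : j < q) (hj' : j' < q)
    (h : q * t + j = q * t' + j') : t = t' ∧ j = j' := by
  have hq : 0 < q := by omega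
  obtain ⟨htd, hjm⟩ := (Nat.div_mod_unique hq).2 ⟨by rw [add_comm, h], hj⟩
  obtain ⟨htd', hjm'⟩ := (Nat.div_mod_unique hq).2 ⟨add_comm j' _, hj'⟩
  exact ⟨htd.symm.trans htd', hjm.symm.trans hjm'⟩

theorem mul_add_lt_pow {q i k j t : ℕ} (hk : 2 ≤ q ^ k)
    (ht : (t : ℤ) * ((q : ℤ) ^ (k + 1) - q) < (q : ℤ) ^ i - j * ((q : ℤ) ^ k - 1) - 1) :
    q * t + j < q ^ i :=
  lt_of_mul_add_one_lt_add hk (mul_pow_add_one_lt_iff.2 ht)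

theorem stmt4_general (q n r m s : ℕ) (hs : 0 < s)
    (hnrs : n * r * s = q ^ m - 1)
    (i j t : ℕ) (his : s + 1 ≤ q ^ (m - i))
    (hj2 : j ≤ q - 1)
    (ht : (t : ℤ) * ((q : ℤ) ^ (m - i + 1) - (q : ℤ)) <
      (q : ℤ) ^ i - (j : ℤ) * ((q : ℤ) ^ (m - i) - 1) - 1) :
    (1 ≤ q ^ i + q * t + j ∧ q ^ i + q * t + j < n * r) ∧
    (∃ y ∈ cosetOf q (n * r) (q ^ i + q * t + j), y < q ^ i + q * t + j) ∧
    (∀ i' j' t' : ℕ, m + 1 ≤ 2 * i' → s + 1 ≤ q ^ (m - i') → 1 ≤ j' → j' ≤ q - 1 →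
      (t' : ℤ) * ((q : ℤ) ^ (m - i' + 1) - (q : ℤ)) <
        (q : ℤ) ^ i' - (j' : ℤ) * ((q : ℤ) ^ (m - i') - 1) - 1 →
      q ^ i + q * t + j = q ^ i' + q * t' + j' → i = i' ∧ j = j' ∧ t = t') := by
  have hk : m - i ≠ 0 := fun h => by rw [h, pow_zero] at his; omega
  have hq : 1 < q := (Nat.one_lt_pow_iff hk).1 (by omega)
  have hqm : q ^ (i + (m - i)) = n * r * s + 1 := by
    rw [Nat.add_sub_cancel' (by omega)]
    have := Nat.one_le_pow m q (by omega)
    omega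
  have hyx := mul_pow_add_one_lt_iff.2 ht
  have hcycle := pow_add_mul_pow_eq (u := q * t + j) hqm
  have hxN := lt_of_mul_eq_add_mul hcycle hyx his
  simp only [← add_assoc] at hyx hcycle hxN ⊢
  refine ⟨⟨by omega, hxN⟩, ⟨_, mem_cosetOf_of_modEq (k := m - i) (by omega) (by omega) ?_, hyx⟩, ?_⟩
  · rw [Nat.ModEq, hcycle, Nat.add_mul_mod_self_left]
  · intro i' j' t' _ his' _ hj2' ht' h
    obtain ⟨rfl, hu⟩ := eq_of_pow_add_eq_pow_add hq (mul_add_lt_pow (by omega) ht)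
      (mul_add_lt_pow (by omega) ht') (by simpa only [add_assoc] using h)
    obtain ⟨rfl, rfl⟩ := eq_of_mul_add_eq_mul_add (by omega) (by omega) hu
    exact ⟨rfl, rfl, rfl⟩

theorem stmt4 (q n r m s : ℕ) (hq : IsPrimePow q) (hn : 0 < n) (hco : Nat.Coprime n q)
    (hr : 0 < r) (hrdvd : r ∣ q - 1) (hm : 0 < m) (hs : 0 < s)
    (hnrs : n * r * s = q ^ m - 1)
    (i j t : ℕ) (hi : m + 1 ≤ 2 * i) (his : s + 1 ≤ q ^ (m - i))
    (hj1 : 1 ≤ j) (hj2 : j ≤ q - 1)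
    (ht : (t : ℤ) * ((q : ℤ) ^ (m - i + 1) - (q : ℤ)) <
      (q : ℤ) ^ i - (j : ℤ) * ((q : ℤ) ^ (m - i) - 1) - 1) :
    (1 ≤ q ^ i + q * t + j ∧ q ^ i + q * t + j < n * r) ∧
    (∃ y ∈ cosetOf q (n * r) (q ^ i + q * t + j), y < q ^ i + q * t + j) ∧
    (∀ i' j' t' : ℕ, m + 1 ≤ 2 * i' → s + 1 ≤ q ^ (m - i') → 1 ≤ j' → j' ≤ q - 1 →
      (t' : ℤ) * ((q : ℤ) ^ (m - i' + 1) - (q : ℤ)) <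
        (q : ℤ) ^ i' - (j' : ℤ) * ((q : ℤ) ^ (m - i') - 1) - 1 →
      q ^ i + q * t + j = q ^ i' + q * t' + j' → i = i' ∧ j = j' ∧ t = t') :=
  stmt4_general q n r m s hs hnrs i j t his hj2 ht
end

section
/- Let q ≥ 2 be a prime power and let m be a positive integer having at least two distinct prime divisors. Then gcd(Φ_m(q), q−1) = 1, where Φ_m denotes the m-th cyclotomic polynomial evaluated at q. -/
theorem stmt10 (q m : ℕ) (hq : IsPrimePow q) (hm : 0 < m)
    (hpf : 2 ≤ m.primeFactors.card) :
    Int.gcd ((Polynomial.cyclotomic m ℤ).eval (q : ℤ)) ((q : ℤ) - 1) = 1 := by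
  have hnot : ∀ {p : ℕ}, p.Prime → ∀ k : ℕ, p ^ k ≠ m := by
    intro p hp k hk
    rcases Nat.eq_zero_or_pos k with rfl | hk0
    · subst hk; simp at hpf
    · have : IsPrimePow m := hk ▸ ⟨p, k, hp.prime, hk0, rfl⟩
      rw [isPrimePow_iff_card_primeFactors_eq_one] at this
      omega
  have h1 : (Polynomial.cyclotomic m ℤ).eval 1 = 1 :=
    Polynomial.eval_one_cyclotomic_not_prime_pow hnot
  obtain ⟨k, hk⟩ := Polynomial.sub_dvd_eval_sub (q : ℤ) 1 (Polynomial.cyclotomic m ℤ)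
  rw [h1] at hk
  rw [← Int.isCoprime_iff_gcd_eq_one]
  exact ⟨1, -k, by linarith⟩
end
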